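/- Let (Γ₁,...,Γ_d) be a cycle-free d-partition of K_{2d} with Γ_d = Ω_d^{(d)}, and let a ≠ b be vertices in {1,...,2d−2} with (a,b) ∈ E(Γ_i), (a,2d) ∈ E(Γ_i), and (b,2d) ∈ E(Γ_j) for some i ≠ j, i,j ≤ d−1. Then the involution (a,b,2d) applied to (Γ₁,...,Γ_d) swaps the edges (a,2d) and (b,2d) between Γ_i and Γ_j, keeps (a,b) in Γ_i, and leaves all other edges incident to vertices 2d−1 or 2d unchanged. -/

import Mathlib

open SimpleGraph

/-- A cycle-free `d`-partition of the complete graph on `Fin n`: each unordered pair of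
distinct vertices is an edge of exactly one component, and every component is acyclic. -/
def IsCFP {n d : ℕ} (Γ : Fin d → SimpleGraph (Fin n)) : Prop :=
  (∀ u v : Fin n, u ≠ v → ∃! i, (Γ i).Adj u v) ∧ ∀ i, (Γ i).IsAcyclic

/-- `(u,v)` is the same unordered pair as `(a,b)`. -/
def SamePair {n : ℕ} (u v a b : Fin n) : Prop := (u = a ∧ v = b) ∨ (u = b ∧ v = a)

/-- The partitions `P` and `Q` differ on the edge `(u,v)`. -/
def Differs {n d : ℕ} (P Q : Fin d → SimpleGraph (Fin n)) (u v : Fin n) : Prop :=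
  ∃ i, ¬ ((Q i).Adj u v ↔ (P i).Adj u v)

/-- `Q` agrees with `P` on every edge except the edges `(x,y)`, `(x,z)`, `(y,z)`,
and differs from `P` on at least two of those three edges. -/
def FlipCond {n d : ℕ} (x y z : Fin n) (P Q : Fin d → SimpleGraph (Fin n)) : Prop :=
  (∀ u v : Fin n, ¬ SamePair u v x y → ¬ SamePair u v x z → ¬ SamePair u v y z →
      ∀ i, ((Q i).Adj u v ↔ (P i).Adj u v)) ∧
  ((Differs P Q x y ∧ Differs P Q x z) ∨ (Differs P Q x y ∧ Differs P Q y z) ∨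
    (Differs P Q x z ∧ Differs P Q y z))

/-- One involution move between cycle-free partitions. -/
def Step {n d : ℕ} (P Q : Fin d → SimpleGraph (Fin n)) : Prop :=
  IsCFP P ∧ IsCFP Q ∧ ∃ x y z : Fin n, x ≠ y ∧ x ≠ z ∧ y ≠ z ∧ FlipCond x y z P Q

/-- Involution equivalence: a finite sequence of involution moves. -/
def InvEquiv {n d : ℕ} : (Fin d → SimpleGraph (Fin n)) → (Fin d → SimpleGraph (Fin n)) → Prop :=
  Relation.ReflTransGen Step

/-- The graph `Ω_t^{(d)}` on vertices `{1,…,2d}` (vertex `v : Fin (2d)` has label `v+1`):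
the edge `(i,j)`, `i<j`, belongs to `Ω_t` iff `i+j` is even and `i ∈ {2t-1,2t}`,
or `i+j` is odd and `j ∈ {2t-1,2t}`. -/
def Omega (d t : ℕ) : SimpleGraph (Fin (2*d)) :=
  SimpleGraph.fromRel (fun u v =>
    u.1 < v.1 ∧
    (((u.1 + v.1) % 2 = 0 ∧ (u.1 + 1 = 2*t - 1 ∨ u.1 + 1 = 2*t)) ∨
     ((u.1 + v.1) % 2 = 1 ∧ (v.1 + 1 = 2*t - 1 ∨ v.1 + 1 = 2*t))))

/-- The standard twin-star cycle-free `d`-partition `E_d = (Ω₁,…,Ω_d)`. -/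
def Ed (d : ℕ) : Fin d → SimpleGraph (Fin (2*d)) := fun t => Omega d (t.1 + 1)

/-- The twin-star graph `TS_d` with `2d` vertices: centers `0` and `1` are adjacent,
center `0` is adjacent to the `d-1` leaves `2,…,d`, and center `1` to the leaves
`d+1,…,2d-1`. -/
def TwinStar (d : ℕ) : SimpleGraph (Fin (2*d)) :=
  SimpleGraph.fromRel (fun u v =>
    (u.1 = 0 ∧ 1 ≤ v.1 ∧ v.1 ≤ d) ∨ (u.1 = 1 ∧ d + 1 ≤ v.1))

/-- The action of `(σ, τ) ∈ S_{2d} × S_d` on a `d`-partition: `σ` relabels vertices and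
`τ` permutes the order of the components. -/
def actP {n d : ℕ} (σ : Equiv.Perm (Fin n)) (τ : Equiv.Perm (Fin d))
    (P : Fin d → SimpleGraph (Fin n)) : Fin d → SimpleGraph (Fin n) :=
  fun i => (P (τ⁻¹ i)).map σ.toEmbedding

/-- One step of weak equivalence: `P = (σ,τ) · (an involution move applied to Q)`. -/
def WStep {n d : ℕ} (P Q : Fin d → SimpleGraph (Fin n)) : Prop :=
  ∃ (σ : Equiv.Perm (Fin n)) (τ : Equiv.Perm (Fin d)) (R : Fin d → SimpleGraph (Fin n)),
    Step Q R ∧ P = actP σ τ R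

/-- Weak equivalence of cycle-free `d`-partitions. -/
def WeakEquiv {n d : ℕ} : (Fin d → SimpleGraph (Fin n)) → (Fin d → SimpleGraph (Fin n)) → Prop :=
  Relation.ReflTransGen WStep

/-!
A cycle-free `d`-partition of `K_{2d}` spreads the `d(2d-1)` edges of `K_{2d}` over `d` forests
on `2d` vertices, each with at most `2d-1` edges, so every component is a spanning tree. The
degrees of the vertex `2d` in the components add up to `2d-1`; it is `d` in `Ω_d^{(d)}` and
positive in every tree, so `2d` is a leaf of each other component: its only neighbour is `a` in
`Γ_i` and `b` in `Γ_j`. The move only touches the triangle `a, b, 2d`, so in `Q` the neighbours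
of `2d` in the spanning trees `Q_i`, `Q_j` still lie in `{a, b}`. If `(a,2d)` stayed in `Q_i`,
then `(b,2d)` would stay in `Q_j` and the move would change only one edge. Hence `(b,2d) ∈ Q_i`
and `(a,2d) ∈ Q_j`; and `Q_i` keeps `(a,b)`, since otherwise it would lose two triangle edges
and gain only one, leaving fewer than `2d-1` edges.
-/

open Finset

namespace SimpleGraph

variable {V : Type*} {G H : SimpleGraph V}

theorem IsAcyclic.exists_isTree_le [Nonempty V] (hG : G.IsAcyclic) : ∃ T, G ≤ T ∧ T.IsTree := by
  obtain ⟨T, hGT, -, hT⟩ := connected_top.exists_isTree_le_of_le_of_isAcyclic le_top hG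
  exact ⟨T, hGT, hT⟩

section Finite

variable [Fintype V] [Nonempty V] [Fintype G.edgeSet]

theorem IsAcyclic.card_edgeFinset_add_one_le (hG : G.IsAcyclic) :
    #G.edgeFinset + 1 ≤ Fintype.card V := by
  classical
  obtain ⟨T, hGT, hT⟩ := hG.exists_isTree_le
  rw [← hT.card_edgeFinset]
  exact Nat.add_le_add_right (card_le_card (edgeFinset_mono hGT)) 1

theorem IsAcyclic.isTree_of_card_edgeFinset (hG : G.IsAcyclic)
    (hcard : #G.edgeFinset + 1 = Fintype.card V) : G.IsTree := by
  classical
  obtain ⟨T, hGT, hT⟩ := hG.exists_isTree_le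
  have hsub := edgeFinset_mono hGT
  rw [← hT.card_edgeFinset, Nat.add_right_cancel_iff] at hcard
  rwa [edgeFinset_inj.mp (eq_of_subset_of_card_le hsub hcard.ge)]

end Finite

theorem card_edgeFinset_inter_eq [DecidableEq V] [Fintype G.edgeSet] [Fintype H.edgeSet]
    (S : Finset (Sym2 V)) (hcard : #G.edgeFinset = #H.edgeFinset)
    (hGH : ∀ e ∉ S, e ∈ G.edgeSet ↔ e ∈ H.edgeSet) :
    #(G.edgeFinset ∩ S) = #(H.edgeFinset ∩ S) := by
  have hsdiff : G.edgeFinset \ S = H.edgeFinset \ S := by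
    ext e
    simp only [mem_sdiff, mem_edgeFinset]
    exact ⟨fun ⟨he, hS⟩ => ⟨(hGH e hS).mp he, hS⟩, fun ⟨he, hS⟩ => ⟨(hGH e hS).mpr he, hS⟩⟩
  have hG := card_sdiff_add_card_inter G.edgeFinset S
  have hH := card_sdiff_add_card_inter H.edgeFinset S
  rw [hsdiff] at hG
  omega

end SimpleGraph

open SimpleGraph

namespace IsCFP

section

variable {n d : ℕ} {P Q : Fin d → SimpleGraph (Fin n)}

theorem eq_of_adj (hP : IsCFP P) {u v : Fin n} {k l : Fin d} (hk : (P k).Adj u v)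
    (hl : (P l).Adj u v) : k = l :=
  (hP.1 u v hk.ne).unique hk hl

theorem not_differs (hP : IsCFP P) (hQ : IsCFP Q) {u v : Fin n} {k : Fin d}
    (hPk : (P k).Adj u v) (hQk : (Q k).Adj u v) : ¬ Differs P Q u v := by
  rintro ⟨l, hl⟩
  exact hl ⟨fun hQl => hQ.eq_of_adj hQk hQl ▸ hPk, fun hPl => hP.eq_of_adj hPk hPl ▸ hQk⟩

open scoped Classical in
theorem sum_degree (hP : IsCFP P) (v : Fin n) : ∑ k, (P k).degree v = n - 1 := by
  have hdisj : ((univ : Finset (Fin d)) : Set (Fin d)).PairwiseDisjoint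
      fun k => (P k).neighborFinset v := by
    intro k _ l _ hkl
    simp only [Function.onFun, Finset.disjoint_left, mem_neighborFinset]
    exact fun u hk hl => hkl (hP.eq_of_adj hk hl)
  have hunion : univ.biUnion (fun k => (P k).neighborFinset v) = univ.erase v := by
    ext u
    simp only [mem_biUnion, mem_univ, true_and, mem_neighborFinset, mem_erase, and_true]
    exact ⟨fun ⟨k, hk⟩ => hk.ne.symm, fun hu => (hP.1 v u hu.symm).exists⟩
  simp_rw [← card_neighborFinset_eq_degree]
  rw [← card_biUnion hdisj, hunion, card_erase_of_mem (mem_univ v), card_univ, Fintype.card_fin]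

open scoped Classical in
theorem sum_card_edgeFinset (hP : IsCFP P) : ∑ k, #(P k).edgeFinset = n.choose 2 := by
  have h2 : 2 * ∑ k, #(P k).edgeFinset = n * (n - 1) := by
    simp_rw [mul_sum, ← sum_degrees_eq_twice_card_edges]
    rw [sum_comm]
    simp [hP.sum_degree]
  rw [Nat.choose_two_right]
  omega

end

variable {d : ℕ} {P : Fin d → SimpleGraph (Fin (2 * d))}

theorem isTree (hP : IsCFP P) (k : Fin d) : (P k).IsTree := by
  classical
  have hd := k.pos
  have : Nonempty (Fin (2 * d)) := ⟨⟨0, by omega⟩⟩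
  have hle : ∀ l, #(P l).edgeFinset ≤ 2 * d - 1 := fun l => by
    have := (hP.2 l).card_edgeFinset_add_one_le
    rw [Fintype.card_fin] at this
    omega
  have hsum : ∑ l, #(P l).edgeFinset = ∑ _l : Fin d, (2 * d - 1) := by
    rw [hP.sum_card_edgeFinset, Nat.choose_two_right, sum_const, card_univ, Fintype.card_fin,
      smul_eq_mul, Nat.mul_assoc, Nat.mul_div_cancel_left _ two_pos]
  have hk := (sum_eq_sum_iff_of_le fun l _ => hle l).mp hsum k (mem_univ k)
  refine (hP.2 k).isTree_of_card_edgeFinset ?_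
  rw [hk, Fintype.card_fin]
  omega

open scoped Classical in
theorem degree_pos (hP : IsCFP P) (k : Fin d) (v : Fin (2 * d)) : 0 < (P k).degree v := by
  have : Nontrivial (Fin (2 * d)) := Fin.nontrivial_iff_two_le.mpr (by have := k.pos; omega)
  exact (hP.isTree k).connected.preconnected.degree_pos_of_nontrivial v

open scoped Classical in
theorem degree_eq_one (hP : IsCFP P) {v : Fin (2 * d)} {l : Fin d} (hl : (P l).degree v = d)
    {k : Fin d} (hkl : k ≠ l) : (P k).degree v = 1 := by
  have hsum := hP.sum_degree v
  rw [← add_sum_erase _ _ (mem_univ l), hl] at hsum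
  have hrest : ∑ m ∈ univ.erase l, (P m).degree v = ∑ _m ∈ univ.erase l, 1 := by
    rw [sum_const, card_erase_of_mem (mem_univ l), card_univ, Fintype.card_fin, smul_eq_mul,
      mul_one]
    omega
  exact ((sum_eq_sum_iff_of_le fun m _ => hP.degree_pos m v).mp hrest.symm k
    (mem_erase.mpr ⟨hkl, mem_univ k⟩)).symm

end IsCFP

theorem omega_self_adj_last_iff {d : ℕ} (hz : 2 * d - 1 < 2 * d) (u : Fin (2 * d)) :
    (Omega d d).Adj u ⟨2 * d - 1, hz⟩ ↔ u.1 % 2 = 0 := by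
  rw [Omega, fromRel_adj, Fin.ne_iff_vne]
  dsimp only
  have := u.2
  omega

open scoped Classical in
theorem omega_self_degree_last {d : ℕ} (hz : 2 * d - 1 < 2 * d) :
    (Omega d d).degree ⟨2 * d - 1, hz⟩ = d := by
  have hdouble : Function.Injective fun k : Fin d => (⟨2 * k.1, by omega⟩ : Fin (2 * d)) :=
    fun k l hkl => Fin.ext (by simpa using congrArg Fin.val hkl)
  have hnbrs : (Omega d d).neighborFinset ⟨2 * d - 1, hz⟩ =
      univ.image fun k : Fin d => (⟨2 * k.1, by omega⟩ : Fin (2 * d)) := by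
    ext u
    have := u.2
    simp only [mem_neighborFinset, adj_comm _ _ u, omega_self_adj_last_iff, mem_image, mem_univ,
      true_and, Fin.ext_iff]
    exact ⟨fun h => ⟨⟨u.1 / 2, by omega⟩, by dsimp only; omega⟩, fun ⟨k, hk⟩ => by omega⟩
  rw [← card_neighborFinset_eq_degree, hnbrs, card_image_of_injective _ hdouble, card_univ,
    Fintype.card_fin]

namespace FlipCond

section

variable {n d : ℕ} {P Q : Fin d → SimpleGraph (Fin n)} {x y z : Fin n}

theorem mem_edgeSet_iff (h : FlipCond x y z P Q) {e : Sym2 (Fin n)}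
    (he : e ∉ ({s(x, y), s(x, z), s(y, z)} : Finset (Sym2 (Fin n)))) (k : Fin d) :
    e ∈ (P k).edgeSet ↔ e ∈ (Q k).edgeSet := by
  induction e using Sym2.ind with
  | _ u v =>
    simp only [mem_insert, mem_singleton, not_or] at he
    exact (h.1 u v (he.1 ∘ Sym2.eq_iff.mpr) (he.2.1 ∘ Sym2.eq_iff.mpr)
      (he.2.2 ∘ Sym2.eq_iff.mpr) k).symm

theorem adj_of_adj_of_ne (h : FlipCond x y z P Q) {k : Fin d} {u : Fin n} (hu : (Q k).Adj z u)
    (hux : u ≠ x) (huy : u ≠ y) : (P k).Adj z u := by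
  refine ((h.1 u z ?_ ?_ ?_ k).mp hu.symm).symm <;> rintro (⟨h₁, h₂⟩ | ⟨h₁, h₂⟩) <;>
    simp_all

end

variable {d : ℕ} {P Q : Fin d → SimpleGraph (Fin (2 * d))} {x y z : Fin (2 * d)}

theorem adj_or_adj_of_adj_of_adj (hP : IsCFP P) (hQ : IsCFP Q) (h : FlipCond x y z P Q)
    (hyz : y ≠ z) {k : Fin d} (hxy : (P k).Adj x y) (hxz : (P k).Adj x z) :
    (Q k).Adj x y ∨ (Q k).Adj x z := by
  classical
  by_contra! hQk
  set S : Finset (Sym2 (Fin (2 * d))) := {s(x, y), s(x, z), s(y, z)}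
  have hcard : #((P k).edgeFinset ∩ S) = #((Q k).edgeFinset ∩ S) :=
    card_edgeFinset_inter_eq S (by
      have := (hP.isTree k).card_edgeFinset; have := (hQ.isTree k).card_edgeFinset; omega)
      fun e he => h.mem_edgeSet_iff he k
  have hPS : {s(x, y), s(x, z)} ⊆ (P k).edgeFinset ∩ S := by
    simp [insert_subset_iff, S, hxy, hxz]
  have hQS : (Q k).edgeFinset ∩ S ⊆ {s(y, z)} := by
    intro e he
    simp only [mem_inter, mem_edgeFinset, S, mem_insert, mem_singleton] at he
    rcases he with ⟨he, rfl | rfl | rfl⟩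
    exacts [absurd he hQk.1, absurd he hQk.2, mem_singleton_self _]
  have := card_le_card hPS
  have := card_le_card hQS
  rw [card_pair (Sym2.congr_right.not.mpr hyz), card_singleton] at *
  omega

open scoped Classical in
theorem swap_of_degree_eq_one (hP : IsCFP P) (hQ : IsCFP Q) (h : FlipCond x y z P Q)
    {i j : Fin d} (hij : i ≠ j) (hxy : (P i).Adj x y) (hxz : (P i).Adj x z)
    (hyz : (P j).Adj y z) (hzi : (P i).degree z = 1) (hzj : (P j).degree z = 1) :
    (Q i).Adj x y ∧ (Q j).Adj x z ∧ (Q i).Adj y z := by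
  have hQz : ∀ k, (∀ u, (P k).Adj z u → u = x ∨ u = y) → (Q k).Adj x z ∨ (Q k).Adj y z := by
    intro k hk
    obtain ⟨w, hw⟩ := (degree_pos_iff_exists_adj _ z).mp (hQ.degree_pos k z)
    by_cases hwx : w = x
    · exact Or.inl (hwx ▸ hw.symm)
    by_cases hwy : w = y
    · exact Or.inr (hwy ▸ hw.symm)
    exact ((hk w (h.adj_of_adj_of_ne hw hwx hwy)).elim hwx hwy).elim
  have hQi := hQz i fun u hu =>
    Or.inl ((degree_eq_one_iff_existsUnique_adj.mp hzi).unique hu hxz.symm)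
  have hQj := hQz j fun u hu =>
    Or.inr ((degree_eq_one_iff_existsUnique_adj.mp hzj).unique hu hyz.symm)
  have hQiyz : (Q i).Adj y z := by
    refine hQi.resolve_left fun hQixz => ?_
    have hQjyz : (Q j).Adj y z := hQj.resolve_left fun hQjxz => hij (hQ.eq_of_adj hQixz hQjxz)
    rcases h.2 with ⟨-, hdiff⟩ | ⟨-, hdiff⟩ | ⟨hdiff, -⟩
    exacts [hP.not_differs hQ hxz hQixz hdiff, hP.not_differs hQ hyz hQjyz hdiff,
      hP.not_differs hQ hxz hQixz hdiff]
  have hQjxz : (Q j).Adj x z := hQj.resolve_right fun hQjyz => hij (hQ.eq_of_adj hQiyz hQjyz)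
  have hQixy : (Q i).Adj x y := (h.adj_or_adj_of_adj_of_adj hP hQ hyz.ne hxy hxz).resolve_right
    fun hQixz => hij (hQ.eq_of_adj hQixz hQjxz)
  exact ⟨hQixy, hQjxz, hQiyz⟩

end FlipCond

/-- Let `(Γ₁,…,Γ_d)` be a cycle-free `d`-partition of `K_{2d}` with last component
`Ω_d^{(d)}`, and let `a ≠ b` be vertices among `{1,…,2d-2}` with `(a,b), (a,2d) ∈ Γ_i`
and `(b,2d) ∈ Γ_j` for `i ≠ j` both different from the last index. Then the involution
`(a,b,2d)` swaps the edges `(a,2d)` and `(b,2d)` between `Γ_i` and `Γ_j`, keeps `(a,b)`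
in `Γ_i`, and leaves all other edges incident to the vertices `2d-1` or `2d` unchanged. -/
theorem swap_edges_at_center (d : ℕ) (hd : 0 < d)
    (Γ Q : Fin d → SimpleGraph (Fin (2*d))) (hΓ : IsCFP Γ)
    (hlast : Γ ⟨d-1, by omega⟩ = Omega d d)
    (a b : Fin (2*d)) (ha : a.1 < 2*d-2) (hb : b.1 < 2*d-2)
    (i j : Fin d) (hij : i ≠ j) (hi : i.1 < d-1) (hj : j.1 < d-1)
    (h1 : (Γ i).Adj a b) (h2 : (Γ i).Adj a ⟨2*d-1, by omega⟩)
    (h3 : (Γ j).Adj b ⟨2*d-1, by omega⟩)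
    (hQ : IsCFP Q) (hflip : FlipCond a b ⟨2*d-1, by omega⟩ Γ Q) :
    (Q i).Adj a b ∧ (Q j).Adj a ⟨2*d-1, by omega⟩ ∧ (Q i).Adj b ⟨2*d-1, by omega⟩ ∧
    (∀ u v : Fin (2*d),
      (u.1 = 2*d-2 ∨ u.1 = 2*d-1 ∨ v.1 = 2*d-2 ∨ v.1 = 2*d-1) →
      ¬ SamePair u v a ⟨2*d-1, by omega⟩ → ¬ SamePair u v b ⟨2*d-1, by omega⟩ →
      ∀ k, ((Q k).Adj u v ↔ (Γ k).Adj u v)) := by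
  classical
  have hleaf : ∀ k : Fin d, k.1 < d - 1 → (Γ k).degree ⟨2*d-1, by omega⟩ = 1 := fun k hk =>
    hΓ.degree_eq_one (l := ⟨d-1, by omega⟩) (by rw [hlast]; exact omega_self_degree_last _)
      (Fin.ne_of_val_ne hk.ne)
  obtain ⟨hQab, hQaz, hQbz⟩ :=
    hflip.swap_of_degree_eq_one hΓ hQ hij h1 h2 h3 (hleaf i hi) (hleaf j hj)
  refine ⟨hQab, hQaz, hQbz, fun u v huv hna hnb => hflip.1 u v ?_ hna hnb⟩
  rintro (⟨rfl, rfl⟩ | ⟨rfl, rfl⟩) <;> omega
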